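/- arXiv:2405.00501 — 5 statements merged into one kernel-verified Lean document; each statement's English description precedes it below -/
import Mathlib

section
/- Let V be a finite-dimensional real vector space with a direct sum decomposition V = V₊ ⊕ V₋, let ω : V × V → ℝ be an alternating bilinear form vanishing on V₊ × V₊ and on V₋ × V₋, and let L : V → V be a linear map such that ω(exp(tL)x, exp(tL)y) = ω(x,y) for all t ∈ ℝ and x,y ∈ V (exp denotes the exponential of endomorphisms). Define a multiplication on G := ℝ × V × ℝ by (z,x,t)·(z',x',t') := (z + z' + ½·ω(exp(−t'L)x, x'), exp(−t'L)x + x', t + t'). Then: (1) this multiplication makes G a group (the semidirect product of the Heisenberg group H(ω) by ℝ); (2) G₊ := {0} × V₊ × {0} is a subgroup of G; (3) the map ℝ × V₋ × ℝ → G/G₊ sending (v,x,u) to the left coset (v,x,u)·G₊ is a bijection. -/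
/-!
Since `exp((s + t)L) = exp(sL) exp(tL)` and `exp(tL)` preserves `ω`, the group axioms are direct
computations, with inverse `(z, x, t)⁻¹ = (-z, -exp(tL)x, -t)` because `ω` is alternating.
Right multiplication by `(0, p, 0)`, `p ∈ V₊`, sends `(z, x, t)` to `(z + ½ ω(x, p), x + p, t)`;
as `ω` vanishes on `V₊ × V₊`, the quantity `z - ½ ω(x, x₊)` together with `x₋` and `t` is
invariant under it, and two elements with the same invariants differ by such a move. Hence the
cosets `g·G₊` are exactly the fibres of `Φ(z, x, t) = (z - ½ ω(x, x₊), x₋, t)`, and `Φ` restricts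
to the identity on `ℝ × V₋ × ℝ`.
-/

namespace NormedSpace

variable {𝔸 : Type*} [NormedRing 𝔸] [NormedAlgebra ℝ 𝔸] [CompleteSpace 𝔸]

theorem exp_add_smul (L : 𝔸) (s t : ℝ) :
    exp ((s + t) • L) = exp (s • L) * exp (t • L) := by
  have hball : ∀ x : 𝔸, x ∈ Metric.eball (0 : 𝔸) (expSeries ℝ 𝔸).radius := fun x =>
    (expSeries_radius_eq_top ℝ 𝔸).symm ▸ edist_lt_top _ _
  rw [add_smul, exp_add_of_commute_of_mem_ball (((Commute.refl L).smul_left s).smul_right t)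
    (hball _) (hball _)]

end NormedSpace

namespace HeisenbergSemidirect

variable {V T : Type*} [AddCommGroup V] [Module ℝ V] (ω : V →ₗ[ℝ] V →ₗ[ℝ] ℝ)
  (E : T → Module.End ℝ V) {Vp Vm : Submodule ℝ V}

/-- The map `Φ` of the paper. -/
noncomputable def cosetInvariant (hc : IsCompl Vm Vp) (g : ℝ × V × T) : ℝ × Vm × T :=
  (g.1 - (1 / 2) * ω g.2.1 (g.2.1 - Vm.projection Vp hc g.2.1), Vm.projectionOnto Vp hc g.2.1,
    g.2.2)

theorem cosetInvariant_mk (hc : IsCompl Vm Vp) (p : ℝ × Vm × T) :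
    cosetInvariant ω hc (p.1, (p.2.1 : V), p.2.2) = p := by
  simp [cosetInvariant]

variable {ω}

theorem apply_add_sub_projection (hc : IsCompl Vm Vp) (hpp : ∀ x ∈ Vp, ∀ y ∈ Vp, ω x y = 0)
    (x : V) {p : V} (hp : p ∈ Vp) :
    ω (x + p) (x + p - Vm.projection Vp hc (x + p)) =
      ω x (x - Vm.projection Vp hc x) + ω x p := by
  have hPp : Vm.projection Vp hc p = 0 := (Vm.projection_apply_eq_zero_iff hc).2 hp
  have hxp : x + p - Vm.projection Vp hc (x + p) = (x - Vm.projection Vp hc x) + p := by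
    rw [map_add, hPp]; abel
  rw [hxp]
  simp only [map_add, LinearMap.add_apply, hpp p hp _ (Vm.sub_projection_mem hc x), hpp p hp p hp]
  ring

variable [AddGroup T] (ω)

noncomputable def mul (a b : ℝ × V × T) : ℝ × V × T :=
  (a.1 + b.1 + (1 / 2) * ω (E (-b.2.2) a.2.1) b.2.1, E (-b.2.2) a.2.1 + b.2.1, a.2.2 + b.2.2)

def inv (a : ℝ × V × T) : ℝ × V × T :=
  (-a.1, -E a.2.2 a.2.1, -a.2.2)

variable {ω E}

theorem mul_assoc (hE : ∀ s t, E (s + t) = E s * E t)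
    (hω : ∀ t x y, ω (E t x) (E t y) = ω x y) (a b c : ℝ × V × T) :
    mul ω E (mul ω E a b) c = mul ω E a (mul ω E b c) := by
  have hEc : E (-(b.2.2 + c.2.2)) a.2.1 = E (-c.2.2) (E (-b.2.2) a.2.1) := by
    rw [neg_add_rev, hE, Module.End.mul_apply]
  simp only [mul, hEc, map_add, LinearMap.add_apply, hω, add_assoc]
  refine Prod.ext ?_ (Prod.ext rfl rfl)
  dsimp only
  ring

theorem zero_mul (a : ℝ × V × T) : mul ω E (0, 0, 0) a = a := by
  simp [mul]

theorem mul_zero (hE0 : E 0 = 1) (a : ℝ × V × T) : mul ω E a (0, 0, 0) = a := by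
  simp [mul, hE0]

theorem mul_inv (halt : ∀ x, ω x x = 0) (a : ℝ × V × T) :
    mul ω E a (inv E a) = (0, 0, 0) := by
  simp [mul, inv, halt]

theorem inv_mul (hE : ∀ s t, E (s + t) = E s * E t) (hE0 : E 0 = 1) (halt : ∀ x, ω x x = 0)
    (a : ℝ × V × T) : mul ω E (inv E a) a = (0, 0, 0) := by
  have hEinv : E (-a.2.2) (E a.2.2 a.2.1) = a.2.1 := by
    rw [← Module.End.mul_apply, ← hE, neg_add_cancel, hE0, Module.End.one_apply]
  simp [mul, inv, hEinv, halt]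

theorem mul_mk_zero_zero (hE0 : E 0 = 1) (g : ℝ × V × T) (p : V) :
    mul ω E g (0, p, 0) = (g.1 + (1 / 2) * ω g.2.1 p, g.2.1 + p, g.2.2) := by
  simp [mul, hE0]

variable (ω E Vp)

def plusSubgroup : Set (ℝ × V × T) :=
  {g | g.1 = 0 ∧ g.2.1 ∈ Vp ∧ g.2.2 = 0}

def leftCoset (g : ℝ × V × T) : Set (ℝ × V × T) :=
  {y | ∃ h ∈ plusSubgroup Vp, y = mul ω E g h}

variable {ω E Vp}

theorem zero_mem_plusSubgroup : ((0 : ℝ), (0 : V), (0 : T)) ∈ plusSubgroup Vp :=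
  ⟨rfl, Vp.zero_mem, rfl⟩

theorem mul_mem_plusSubgroup (hE0 : E 0 = 1) (hpp : ∀ x ∈ Vp, ∀ y ∈ Vp, ω x y = 0)
    {a b : ℝ × V × T} (ha : a ∈ plusSubgroup Vp) (hb : b ∈ plusSubgroup Vp) :
    mul ω E a b ∈ plusSubgroup Vp := by
  obtain ⟨ha₁, ha₂, ha₃⟩ := ha
  obtain ⟨hb₁, hb₂, hb₃⟩ := hb
  refine ⟨?_, ?_, ?_⟩ <;>
    simp [mul, ha₁, ha₃, hb₁, hb₃, hE0, hpp _ ha₂ _ hb₂, Vp.add_mem ha₂ hb₂]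

theorem inv_mem_plusSubgroup (hE0 : E 0 = 1) {a : ℝ × V × T} (ha : a ∈ plusSubgroup Vp) :
    inv E a ∈ plusSubgroup Vp := by
  obtain ⟨ha₁, ha₂, ha₃⟩ := ha
  exact ⟨by simp [inv, ha₁], by simpa [inv, ha₃, hE0] using ha₂, by simp [inv, ha₃]⟩

theorem self_mem_leftCoset (hE0 : E 0 = 1) (g : ℝ × V × T) : g ∈ leftCoset ω E Vp g :=
  ⟨(0, 0, 0), zero_mem_plusSubgroup, (mul_zero hE0 g).symm⟩

theorem mem_leftCoset_iff (hE0 : E 0 = 1) {g y : ℝ × V × T} :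
    y ∈ leftCoset ω E Vp g ↔
      ∃ p ∈ Vp, y = (g.1 + (1 / 2) * ω g.2.1 p, g.2.1 + p, g.2.2) := by
  constructor
  · rintro ⟨⟨z, p, t⟩, ⟨rfl, hp, rfl⟩, rfl⟩
    exact ⟨p, hp, mul_mk_zero_zero hE0 g p⟩
  · rintro ⟨p, hp, rfl⟩
    exact ⟨(0, p, 0), ⟨rfl, hp, rfl⟩, (mul_mk_zero_zero hE0 g p).symm⟩

theorem leftCoset_eq_fiber (hc : IsCompl Vm Vp) (hE0 : E 0 = 1)
    (hpp : ∀ x ∈ Vp, ∀ y ∈ Vp, ω x y = 0) (g : ℝ × V × T) :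
    leftCoset ω E Vp g = {y | cosetInvariant ω hc y = cosetInvariant ω hc g} := by
  obtain ⟨z₀, x₀, t₀⟩ := g
  ext ⟨z, x, t⟩
  simp only [mem_leftCoset_iff hE0, Set.mem_ofPred_eq, cosetInvariant, Prod.mk.injEq]
  constructor
  · rintro ⟨p, hp, rfl, rfl, rfl⟩
    have hPp : Vm.projectionOnto Vp hc p = 0 := (Vm.projectionOnto_apply_eq_zero_iff hc).2 hp
    refine ⟨?_, by rw [map_add, hPp, add_zero], rfl⟩
    rw [apply_add_sub_projection hc hpp x₀ hp]
    ring
  · rintro ⟨hz, hx, rfl⟩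
    have hp : x - x₀ ∈ Vp :=
      (Vm.projectionOnto_apply_eq_zero_iff hc).1 (by rw [map_sub, hx, sub_self])
    have key := apply_add_sub_projection hc hpp x₀ hp
    rw [add_sub_cancel] at key
    exact ⟨x - x₀, hp, by linear_combination hz + (1 / 2) * key, by abel, rfl⟩

theorem leftCoset_mk_injective (hc : IsCompl Vm Vp) (hE0 : E 0 = 1)
    (hpp : ∀ x ∈ Vp, ∀ y ∈ Vp, ω x y = 0) :
    Function.Injective fun p : ℝ × Vm × T => leftCoset ω E Vp (p.1, (p.2.1 : V), p.2.2) := by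
  intro p q hpq
  have hmem : (p.1, (p.2.1 : V), p.2.2) ∈ leftCoset ω E Vp (q.1, (q.2.1 : V), q.2.2) :=
    (Set.ext_iff.mp hpq _).mp (self_mem_leftCoset hE0 _)
  rw [leftCoset_eq_fiber hc hE0 hpp] at hmem
  simpa only [Set.mem_ofPred_eq, cosetInvariant_mk] using hmem

theorem exists_leftCoset_mk_eq (hc : IsCompl Vm Vp) (hE0 : E 0 = 1)
    (hpp : ∀ x ∈ Vp, ∀ y ∈ Vp, ω x y = 0) (g : ℝ × V × T) :
    ∃ p : ℝ × Vm × T, leftCoset ω E Vp (p.1, (p.2.1 : V), p.2.2) = leftCoset ω E Vp g :=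
  ⟨cosetInvariant ω hc g, by
    rw [leftCoset_eq_fiber hc hE0 hpp, leftCoset_eq_fiber hc hE0 hpp, cosetInvariant_mk]⟩

end HeisenbergSemidirect

open HeisenbergSemidirect

theorem stmt2_general {V : Type*} [NormedAddCommGroup V] [NormedSpace ℝ V] [FiniteDimensional ℝ V]
    (Vp Vm : Submodule ℝ V) (hcompl : IsCompl Vp Vm)
    (ω : V →ₗ[ℝ] V →ₗ[ℝ] ℝ) (halt : ∀ x : V, ω x x = 0)
    (hpp : ∀ x ∈ Vp, ∀ y ∈ Vp, ω x y = 0)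
    (L : V →L[ℝ] V)
    (hinv : ∀ (t : ℝ) (x y : V),
      ω (NormedSpace.exp (t • L) x) (NormedSpace.exp (t • L) y) = ω x y)
    (mul : (ℝ × V × ℝ) → (ℝ × V × ℝ) → (ℝ × V × ℝ))
    (hmul : ∀ a b : ℝ × V × ℝ, mul a b =
      (a.1 + b.1 + (1 / 2) * ω (NormedSpace.exp ((-b.2.2) • L) a.2.1) b.2.1,
       NormedSpace.exp ((-b.2.2) • L) a.2.1 + b.2.1,
       a.2.2 + b.2.2))
    (Gp : Set (ℝ × V × ℝ)) (hGp : Gp = {g : ℝ × V × ℝ | g.1 = 0 ∧ g.2.1 ∈ Vp ∧ g.2.2 = 0}) :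
    -- (1) the multiplication makes `ℝ × V × ℝ` a group
    ((∀ a b c, mul (mul a b) c = mul a (mul b c)) ∧
     (∀ a, mul (0, 0, 0) a = a ∧ mul a (0, 0, 0) = a) ∧
     (∀ a, ∃ b, mul a b = (0, 0, 0) ∧ mul b a = (0, 0, 0))) ∧
    -- (2) `G₊ = {0} × V₊ × {0}` is a subgroup
    (((0 : ℝ), (0 : V), (0 : ℝ)) ∈ Gp ∧
     (∀ a ∈ Gp, ∀ b ∈ Gp, mul a b ∈ Gp) ∧
     (∀ a ∈ Gp, ∃ b ∈ Gp, mul a b = (0, 0, 0) ∧ mul b a = (0, 0, 0))) ∧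
    -- (3) `(v,x,u) ↦ (v,x,u)·G₊` is a bijection from `ℝ × V₋ × ℝ` onto `G/G₊`
    ((∀ p q : ℝ × ↥Vm × ℝ,
        {y | ∃ h ∈ Gp, y = mul (p.1, (p.2.1 : V), p.2.2) h} =
          {y | ∃ h ∈ Gp, y = mul (q.1, (q.2.1 : V), q.2.2) h} → p = q) ∧
     (∀ g : ℝ × V × ℝ, ∃ p : ℝ × ↥Vm × ℝ,
        {y | ∃ h ∈ Gp, y = mul (p.1, (p.2.1 : V), p.2.2) h} =
          {y | ∃ h ∈ Gp, y = mul g h})) := by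
  let E : ℝ → Module.End ℝ V := fun t => (NormedSpace.exp (t • L) : V →L[ℝ] V)
  have hE : ∀ s t, E (s + t) = E s * E t := fun s t => by
    rw [← ContinuousLinearMap.toLinearMap_mul]
    exact congrArg (fun A : V →L[ℝ] V => (A : Module.End ℝ V))
      (NormedSpace.exp_add_smul L s t)
  have hE0 : E 0 = 1 := by
    simp only [E, zero_smul, NormedSpace.exp_zero, ContinuousLinearMap.toLinearMap_one]
  obtain rfl : mul = HeisenbergSemidirect.mul ω E := funext₂ hmul
  obtain rfl : Gp = plusSubgroup Vp := hGp
  refine ⟨⟨mul_assoc hE hinv, fun a => ⟨zero_mul a, mul_zero hE0 a⟩,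
      fun a => ⟨inv E a, mul_inv halt a, inv_mul hE hE0 halt a⟩⟩,
    ⟨zero_mem_plusSubgroup, fun a ha b hb => mul_mem_plusSubgroup hE0 hpp ha hb,
      fun a ha => ⟨inv E a, inv_mem_plusSubgroup hE0 ha, mul_inv halt a, inv_mul hE hE0 halt a⟩⟩,
    fun _ _ h => leftCoset_mk_injective hcompl.symm hE0 hpp h,
    exists_leftCoset_mk_eq hcompl.symm hE0 hpp⟩

/-- For a finite-dimensional real vector space `V = V₊ ⊕ V₋`, an alternating
bilinear form `ω` vanishing on `V₊ × V₊` and `V₋ × V₋`, and `L` with `exp(tL)` preserving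
`ω`, the multiplication
`(z,x,t)·(z',x',t') = (z + z' + ½ ω(exp(−t'L)x, x'), exp(−t'L)x + x', t + t')`
makes `ℝ × V × ℝ` a group, `{0} × V₊ × {0}` is a subgroup `G₊`, and
`(v,x,u) ↦ (v,x,u)·G₊` is a bijection from `ℝ × V₋ × ℝ` onto the set of left cosets. -/
theorem stmt2 {V : Type*} [NormedAddCommGroup V] [NormedSpace ℝ V] [FiniteDimensional ℝ V]
    (Vp Vm : Submodule ℝ V) (hcompl : IsCompl Vp Vm)
    (ω : V →ₗ[ℝ] V →ₗ[ℝ] ℝ) (halt : ∀ x : V, ω x x = 0)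
    (hpp : ∀ x ∈ Vp, ∀ y ∈ Vp, ω x y = 0) (hmm : ∀ x ∈ Vm, ∀ y ∈ Vm, ω x y = 0)
    (L : V →L[ℝ] V)
    (hinv : ∀ (t : ℝ) (x y : V),
      ω (NormedSpace.exp (t • L) x) (NormedSpace.exp (t • L) y) = ω x y)
    (mul : (ℝ × V × ℝ) → (ℝ × V × ℝ) → (ℝ × V × ℝ))
    (hmul : ∀ a b : ℝ × V × ℝ, mul a b =
      (a.1 + b.1 + (1 / 2) * ω (NormedSpace.exp ((-b.2.2) • L) a.2.1) b.2.1,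
       NormedSpace.exp ((-b.2.2) • L) a.2.1 + b.2.1,
       a.2.2 + b.2.2))
    (Gp : Set (ℝ × V × ℝ)) (hGp : Gp = {g : ℝ × V × ℝ | g.1 = 0 ∧ g.2.1 ∈ Vp ∧ g.2.2 = 0}) :
    -- (1) the multiplication makes `ℝ × V × ℝ` a group
    ((∀ a b c, mul (mul a b) c = mul a (mul b c)) ∧
     (∀ a, mul (0, 0, 0) a = a ∧ mul a (0, 0, 0) = a) ∧
     (∀ a, ∃ b, mul a b = (0, 0, 0) ∧ mul b a = (0, 0, 0))) ∧
    -- (2) `G₊ = {0} × V₊ × {0}` is a subgroup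
    (((0 : ℝ), (0 : V), (0 : ℝ)) ∈ Gp ∧
     (∀ a ∈ Gp, ∀ b ∈ Gp, mul a b ∈ Gp) ∧
     (∀ a ∈ Gp, ∃ b ∈ Gp, mul a b = (0, 0, 0) ∧ mul b a = (0, 0, 0))) ∧
    -- (3) `(v,x,u) ↦ (v,x,u)·G₊` is a bijection from `ℝ × V₋ × ℝ` onto `G/G₊`
    ((∀ p q : ℝ × ↥Vm × ℝ,
        {y | ∃ h ∈ Gp, y = mul (p.1, (p.2.1 : V), p.2.2) h} =
          {y | ∃ h ∈ Gp, y = mul (q.1, (q.2.1 : V), q.2.2) h} → p = q) ∧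
     (∀ g : ℝ × V × ℝ, ∃ p : ℝ × ↥Vm × ℝ,
        {y | ∃ h ∈ Gp, y = mul (p.1, (p.2.1 : V), p.2.2) h} =
          {y | ∃ h ∈ Gp, y = mul g h})) :=
  stmt2_general Vp Vm hcompl ω halt hpp L hinv mul hmul Gp hGp
end

section
/- Fix κ ∈ {1, −1}. Define a multiplication on ℝ² × ℝ × ℝ² by (z,a,l)·(ẑ,â,l̂) := (z + ẑ + (κ/3)·α(l,l̂)·(l + ½ l̂) + κ·â·l, a + â + ½·α(l,l̂), l + l̂), where α(l,l̂) := l₁l̂₂ − l₂l̂₁ for l = (l₁,l₂), l̂ = (l̂₁,l̂₂) ∈ ℝ², and where (κ/3)·α(l,l̂)·(l + ½ l̂) and κ·â·l are scalar multiples of vectors in ℝ². Then this multiplication makes ℝ² × ℝ × ℝ² a group. -/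
/-- For κ ∈ {1,−1}, the multiplication
`(z,a,l)·(ẑ,â,l̂) = (z + ẑ + (κ/3)·α(l,l̂)·(l + ½ l̂) + κ·â·l, a + â + ½·α(l,l̂), l + l̂)`,
with `α(l,l̂) = l₁l̂₂ − l₂l̂₁`, makes `ℝ² × ℝ × ℝ²` a group. -/
theorem stmt3 (κ : ℝ) (hκ : κ = 1 ∨ κ = -1)
    (mul : ((ℝ × ℝ) × ℝ × (ℝ × ℝ)) → ((ℝ × ℝ) × ℝ × (ℝ × ℝ)) → ((ℝ × ℝ) × ℝ × (ℝ × ℝ)))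
    (hmul : ∀ x y : (ℝ × ℝ) × ℝ × (ℝ × ℝ), mul x y =
      (x.1 + y.1
          + ((κ / 3) * (x.2.2.1 * y.2.2.2 - x.2.2.2 * y.2.2.1)) • (x.2.2 + (1 / 2 : ℝ) • y.2.2)
          + (κ * y.2.1) • x.2.2,
       x.2.1 + y.2.1 + (1 / 2) * (x.2.2.1 * y.2.2.2 - x.2.2.2 * y.2.2.1),
       x.2.2 + y.2.2)) :
    (∀ a b c, mul (mul a b) c = mul a (mul b c)) ∧
    (∀ a, mul (0, 0, 0) a = a ∧ mul a (0, 0, 0) = a) ∧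
    (∀ a, ∃ b, mul a b = (0, 0, 0) ∧ mul b a = (0, 0, 0)) := by
  refine ⟨?_, ?_, ?_⟩
  · intro a b c
    simp only [hmul, Prod.ext_iff, Prod.fst_add, Prod.snd_add, Prod.smul_fst, Prod.smul_snd,
      smul_eq_mul]
    refine ⟨⟨by ring, by ring⟩, by ring, by ring, by ring⟩
  · intro a
    simp only [hmul, Prod.ext_iff, Prod.fst_add, Prod.snd_add, Prod.smul_fst, Prod.smul_snd,
      Prod.fst_zero, Prod.snd_zero, smul_eq_mul]
    constructor <;> refine ⟨⟨by ring, by ring⟩, by ring, by ring, by ring⟩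
  · intro a
    refine ⟨(-a.1 + (κ * a.2.1) • a.2.2, -a.2.1, -a.2.2), ?_, ?_⟩ <;>
    · simp only [hmul, Prod.ext_iff, Prod.fst_add, Prod.snd_add, Prod.smul_fst, Prod.smul_snd,
        Prod.fst_neg, Prod.snd_neg, Prod.fst_zero, Prod.snd_zero, smul_eq_mul]
      refine ⟨⟨by ring, by ring⟩, by ring, by ring, by ring⟩
end

section
/- Fix κ ∈ {1, −1} and let Ĝ be the group ℝ² × ℝ × ℝ² with multiplication (z,a,l)·(ẑ,â,l̂) = (z + ẑ + (κ/3)·α(l,l̂)·(l + ½ l̂) + κ·â·l, a + â + ½·α(l,l̂), l + l̂), where α(l,l̂) = l₁l̂₂ − l₂l̂₁. Then Ĝ₊ := {(0,â,0) : â ∈ ℝ} is a subgroup of Ĝ, and the map Ĝ/Ĝ₊ → ℝ² × ℝ² sending the left coset (z,a,l)·Ĝ₊ to (z − κ·a·l, l) is well defined and bijective. -/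
/-- For κ ∈ {1,−1} and the group `Ĝ = ℝ² × ℝ × ℝ²` with multiplication
`(z,a,l)·(ẑ,â,l̂) = (z + ẑ + (κ/3)·α(l,l̂)·(l + ½ l̂) + κ·â·l, a + â + ½·α(l,l̂), l + l̂)`,
the set `Ĝ₊ = {(0,â,0)}` is a subgroup, and the map sending the left coset `(z,a,l)·Ĝ₊`
to `(z − κ·a·l, l) ∈ ℝ² × ℝ²` is well defined and bijective. -/
theorem stmt4 (κ : ℝ) (hκ : κ = 1 ∨ κ = -1)
    (mul : ((ℝ × ℝ) × ℝ × (ℝ × ℝ)) → ((ℝ × ℝ) × ℝ × (ℝ × ℝ)) → ((ℝ × ℝ) × ℝ × (ℝ × ℝ)))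
    (hmul : ∀ x y : (ℝ × ℝ) × ℝ × (ℝ × ℝ), mul x y =
      (x.1 + y.1
          + ((κ / 3) * (x.2.2.1 * y.2.2.2 - x.2.2.2 * y.2.2.1)) • (x.2.2 + (1 / 2 : ℝ) • y.2.2)
          + (κ * y.2.1) • x.2.2,
       x.2.1 + y.2.1 + (1 / 2) * (x.2.2.1 * y.2.2.2 - x.2.2.2 * y.2.2.1),
       x.2.2 + y.2.2))
    (Gp : Set ((ℝ × ℝ) × ℝ × (ℝ × ℝ)))
    (hGp : Gp = {g : (ℝ × ℝ) × ℝ × (ℝ × ℝ) | g.1 = 0 ∧ g.2.2 = 0}) :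
    -- `Ĝ₊` is a subgroup
    (((0 : ℝ × ℝ), (0 : ℝ), (0 : ℝ × ℝ)) ∈ Gp ∧
     (∀ a ∈ Gp, ∀ b ∈ Gp, mul a b ∈ Gp) ∧
     (∀ a ∈ Gp, ∃ b ∈ Gp, mul a b = (0, 0, 0) ∧ mul b a = (0, 0, 0))) ∧
    -- the map `(z,a,l)·Ĝ₊ ↦ (z − κ·a·l, l)` on left cosets is well defined and injective
    (∀ g g' : (ℝ × ℝ) × ℝ × (ℝ × ℝ),
      {y | ∃ h ∈ Gp, y = mul g h} = {y | ∃ h ∈ Gp, y = mul g' h} ↔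
        (g.1 - (κ * g.2.1) • g.2.2, g.2.2) = (g'.1 - (κ * g'.2.1) • g'.2.2, g'.2.2)) ∧
    -- and surjective onto `ℝ² × ℝ²`
    (∀ p : (ℝ × ℝ) × (ℝ × ℝ), ∃ g : (ℝ × ℝ) × ℝ × (ℝ × ℝ),
      (g.1 - (κ * g.2.1) • g.2.2, g.2.2) = p) := by

  subst hGp
  have key : ∀ (g : (ℝ × ℝ) × ℝ × (ℝ × ℝ)) (b : ℝ),
      mul g (0, b, 0) = (g.1 + (κ * b) • g.2.2, g.2.1 + b, g.2.2) := by
    intro g b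
    rw [hmul]
    simp
  refine ⟨⟨⟨rfl, rfl⟩, ?_, ?_⟩, ?_, ?_⟩
  · rintro ⟨z, a, l⟩ ⟨hz, hl⟩ ⟨z', a', l'⟩ ⟨hz', hl'⟩
    simp only at hz hl hz' hl'
    subst hz hl hz' hl'
    rw [hmul]
    constructor <;> simp
  · rintro ⟨z, a, l⟩ ⟨hz, hl⟩
    simp only at hz hl
    subst hz hl
    refine ⟨(0, -a, 0), ⟨rfl, rfl⟩, ?_, ?_⟩ <;> · rw [hmul]; simp
  · intro g g'
    constructor
    · intro hset
      have hg : g ∈ {y | ∃ h ∈ {g : (ℝ × ℝ) × ℝ × (ℝ × ℝ) | g.1 = 0 ∧ g.2.2 = 0}, y = mul g' h} := by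
        rw [← hset]
        exact ⟨(0, 0, 0), ⟨rfl, rfl⟩, by rw [key]; simp⟩
      obtain ⟨⟨hz, b, hl⟩, ⟨hh1, hh2⟩, hgeq⟩ := hg
      simp only at hh1 hh2
      subst hh1 hh2
      rw [key] at hgeq
      have h1 : g.1 = g'.1 + (κ * b) • g'.2.2 := congrArg Prod.fst hgeq
      have h2 : g.2.1 = g'.2.1 + b := congrArg (fun x => x.2.1) hgeq
      have h3 : g.2.2 = g'.2.2 := congrArg (fun x => x.2.2) hgeq
      ext
      · show (g.1 - (κ * g.2.1) • g.2.2).1 = _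
        rw [h1, h2, h3]; ring_nf
        simp [Prod.smul_fst, Prod.add_def, Prod.sub_def]
        ring
      · show (g.1 - (κ * g.2.1) • g.2.2).2 = _
        rw [h1, h2, h3]; ring_nf
        simp [Prod.smul_snd, Prod.add_def, Prod.sub_def]
        ring
      · exact congrArg (fun x => x.1) h3
      · exact congrArg (fun x => x.2) h3
    · intro heq
      have h3 : g.2.2 = g'.2.2 := congrArg (fun x => x.2) heq
      have h1 : g.1 - (κ * g.2.1) • g.2.2 = g'.1 - (κ * g'.2.1) • g'.2.2 :=
        congrArg (fun x => x.1) heq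
      have main : ∀ b : ℝ, mul g (0, b, 0) = mul g' (0, g.2.1 + b - g'.2.1, 0) := by
        intro b
        rw [key, key, ← h3]
        refine Prod.ext ?_ (Prod.ext (by ring) rfl)
        have : g'.1 = g.1 - (κ * g.2.1) • g.2.2 + (κ * g'.2.1) • g.2.2 := by
          rw [h1, h3]; abel
        rw [this]
        have expand : ∀ c d : ℝ, (c + d) • g.2.2 = c • g.2.2 + d • g.2.2 := fun c d => add_smul c d _
        rw [show κ * (g.2.1 + b - g'.2.1) = κ * g.2.1 + κ * b + (-(κ * g'.2.1)) by ring]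
        rw [expand, expand]
        simp [sub_smul, neg_smul]
        abel
      ext y
      constructor
      · rintro ⟨⟨hz, b, hl⟩, ⟨hh1, hh2⟩, rfl⟩
        simp only at hh1 hh2
        subst hh1 hh2
        exact ⟨(0, g.2.1 + b - g'.2.1, 0), ⟨rfl, rfl⟩, main b⟩
      · rintro ⟨⟨hz, b, hl⟩, ⟨hh1, hh2⟩, rfl⟩
        simp only at hh1 hh2
        subst hh1 hh2
        refine ⟨(0, g'.2.1 + b - g.2.1, 0), ⟨rfl, rfl⟩, ?_⟩
        rw [main (g'.2.1 + b - g.2.1)]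
        congr 2
        ring
  · intro p
    exact ⟨(p.1, 0, p.2), by simp⟩
end

section
/- For every b ∈ ℝ³ and every A ∈ SO(3) there exists a pair (v,u) ∈ ℝ³ × ℝ³ with ⟨u,u⟩ = 1 and ⟨u,v⟩ = 0 such that A·u = u and A·v + b × u = v. In other words, every element (b,A) of the transvection group ℝ³ ⋊ SO(3) of the symmetric space Z(1,c), acting on the tangent bundle M = {(v,u) ∈ ℝ³×ℝ³ : ⟨u,u⟩ = 1, ⟨u,v⟩ = 0} of the unit sphere by (b,A)·(v,u) = (Av + b × (Au), Au), has a fixed point on M. In particular, no nontrivial subgroup of ℝ³ ⋊ SO(3) acts freely on M. -/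
open Matrix

/-- The standard cross product on `ℝ³`. -/
def cross3 (x y : Fin 3 → ℝ) : Fin 3 → ℝ :=
  ![x 1 * y 2 - x 2 * y 1, x 2 * y 0 - x 0 * y 2, x 0 * y 1 - x 1 * y 0]

lemma my_dot_cross (u x y : Fin 3 → ℝ) :
    u ⬝ᵥ cross3 x y = Matrix.det (Matrix.of ![u, x, y]) := by
  simp [cross3, dotProduct, Fin.sum_univ_three, Matrix.det_fin_three]
  ring

lemma my_dot_cross_self (u b : Fin 3 → ℝ) : u ⬝ᵥ cross3 b u = 0 := by
  simp [cross3, dotProduct, Fin.sum_univ_three]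
  ring

lemma my_dot_cross_quad (u x : Fin 3 → ℝ) :
    u ⬝ᵥ cross3 x (cross3 u x) = (u ⬝ᵥ u) * (x ⬝ᵥ x) - (u ⬝ᵥ x) ^ 2 := by
  simp [cross3, dotProduct, Fin.sum_univ_three]
  ring

lemma my_cross_smul_self (b : Fin 3 → ℝ) (c : ℝ) : cross3 b (c • b) = 0 := by
  funext i
  fin_cases i <;> simp [cross3] <;> ring

lemma my_outer_mulVec (u x : Fin 3 → ℝ) :
    (Matrix.vecMulVec u u) *ᵥ x = (u ⬝ᵥ x) • u := by
  funext i
  simp [Matrix.mulVec, Matrix.vecMulVec_apply, dotProduct, Fin.sum_univ_three]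
  ring

lemma my_dot_self_nonneg (x : Fin 3 → ℝ) : 0 ≤ x ⬝ᵥ x :=
  Finset.sum_nonneg fun i _ => mul_self_nonneg _

lemma my_dot_self_pos (x : Fin 3 → ℝ) (hx : x ≠ 0) : 0 < x ⬝ᵥ x := by
  rcases lt_or_eq_of_le (my_dot_self_nonneg x) with h | h
  · exact h
  · exact absurd (dotProduct_self_eq_zero.mp h.symm) hx

lemma my_unit_smul (x : Fin 3 → ℝ) (hx : x ≠ 0) :
    ((Real.sqrt (x ⬝ᵥ x))⁻¹ • x) ⬝ᵥ ((Real.sqrt (x ⬝ᵥ x))⁻¹ • x) = 1 := by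
  have hxx : 0 < x ⬝ᵥ x := my_dot_self_pos x hx
  rw [smul_dotProduct, dotProduct_smul, smul_eq_mul, smul_eq_mul, ← mul_assoc,
    ← mul_inv, Real.mul_self_sqrt hxx.le, inv_mul_cancel₀ hxx.ne']

lemma my_orth_mul (A : Matrix (Fin 3) (Fin 3) ℝ)
    (hA : ∀ x y : Fin 3 → ℝ, A.mulVec x ⬝ᵥ A.mulVec y = x ⬝ᵥ y) :
    Aᵀ * A = 1 := by
  ext i j
  have h := hA (Pi.single i 1) (Pi.single j 1)
  simp [Matrix.mulVec_single, dotProduct, Pi.single_apply, Fin.sum_univ_three,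
    Matrix.mul_apply, Matrix.one_apply] at h ⊢
  by_cases hij : i = j
  · subst hij; simp at h ⊢; linarith
  · simp [hij, Ne.symm hij] at h ⊢; linarith

lemma my_fix_cross (A : Matrix (Fin 3) (Fin 3) ℝ)
    (hA : ∀ x y : Fin 3 → ℝ, A.mulVec x ⬝ᵥ A.mulVec y = x ⬝ᵥ y)
    (hdet : A.det = 1) (u x : Fin 3 → ℝ)
    (hu : A *ᵥ u = u) (hx : A *ᵥ x = x) :
    A *ᵥ cross3 u x = cross3 u x := by
  have hAtA : Aᵀ * A = 1 := my_orth_mul A hA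
  have hu' : u ᵥ* A = u := by
    rw [← Matrix.mulVec_transpose]
    calc Aᵀ *ᵥ u = Aᵀ *ᵥ (A *ᵥ u) := by rw [hu]
    _ = (Aᵀ * A) *ᵥ u := Matrix.mulVec_mulVec u Aᵀ A
    _ = u := by rw [hAtA, Matrix.one_mulVec]
  have hx' : x ᵥ* A = x := by
    rw [← Matrix.mulVec_transpose]
    calc Aᵀ *ᵥ x = Aᵀ *ᵥ (A *ᵥ x) := by rw [hx]
    _ = (Aᵀ * A) *ᵥ x := Matrix.mulVec_mulVec x Aᵀ A
    _ = x := by rw [hAtA, Matrix.one_mulVec]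
  have key : ∀ w : Fin 3 → ℝ, w ⬝ᵥ (A *ᵥ cross3 u x) = w ⬝ᵥ cross3 u x := by
    intro w
    have h1 : w ⬝ᵥ (A *ᵥ cross3 u x) = (Aᵀ *ᵥ w) ⬝ᵥ cross3 u x := by
      rw [Matrix.dotProduct_mulVec, ← Matrix.mulVec_transpose]
    rw [h1, my_dot_cross, my_dot_cross]
    have hM : Matrix.of ![Aᵀ *ᵥ w, u, x] = Matrix.of ![w, u, x] * A := by
      ext i j
      fin_cases i
      · simp [Matrix.mul_apply, Matrix.mulVec, dotProduct, Fin.sum_univ_three]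
        ring
      · have h := congrFun hu' j
        simp [Matrix.vecMul, dotProduct, Fin.sum_univ_three] at h
        simp [Matrix.mul_apply, Fin.sum_univ_three]
        linarith
      · have h := congrFun hx' j
        simp [Matrix.vecMul, dotProduct, Fin.sum_univ_three] at h
        simp [Matrix.mul_apply, Fin.sum_univ_three]
        linarith
    rw [hM, Matrix.det_mul, hdet, mul_one]
  funext i
  have h := key (Pi.single i 1)
  simpa [single_dotProduct] using h

lemma stmt5_part1 (b : Fin 3 → ℝ) (A : Matrix (Fin 3) (Fin 3) ℝ)
    (hA : ∀ x y : Fin 3 → ℝ, A.mulVec x ⬝ᵥ A.mulVec y = x ⬝ᵥ y) (hdet : A.det = 1) :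
    ∃ v u : Fin 3 → ℝ, u ⬝ᵥ u = 1 ∧ u ⬝ᵥ v = 0 ∧
      A.mulVec u = u ∧ A.mulVec v + cross3 b u = v := by
  by_cases h1 : A = 1
  · by_cases hb : b = 0
    · refine ⟨0, ![1,0,0], ?_, ?_, ?_, ?_⟩
      · simp [dotProduct, Fin.sum_univ_three]
      · simp
      · simp [h1, Matrix.one_mulVec]
      · subst h1; subst hb
        funext i
        fin_cases i <;> simp [cross3, Matrix.mulVec_zero]
    · refine ⟨0, (Real.sqrt (b ⬝ᵥ b))⁻¹ • b, my_unit_smul b hb, ?_, ?_, ?_⟩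
      · simp
      · simp [h1, Matrix.one_mulVec]
      · rw [h1, Matrix.mulVec_zero, my_cross_smul_self, zero_add]
  · have hAtA : Aᵀ * A = 1 := my_orth_mul A hA
    have hAAt : A * Aᵀ = 1 := mul_eq_one_comm.mp hAtA
    -- Euler: det (A - 1) = 0
    have hdet0 : (A - 1).det = 0 := by
      have h2 : A - 1 = A * (1 - Aᵀ) := by
        rw [Matrix.mul_sub, mul_one, hAAt]
      have h3 : (1 - Aᵀ) = (1 - A)ᵀ := by
        rw [Matrix.transpose_sub, Matrix.transpose_one]
      have h4 : (A - 1).det = (1 - A).det := by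
        rw [h2, Matrix.det_mul, hdet, one_mul, h3, Matrix.det_transpose]
      have h5 : (1 - A) = -(A - 1) := (neg_sub A 1).symm
      rw [h5, Matrix.det_neg] at h4
      simp at h4
      linarith
    obtain ⟨u₀, hu0ne, hu0⟩ := Matrix.exists_mulVec_eq_zero_iff.mpr hdet0
    have hfix0 : A *ᵥ u₀ = u₀ := by
      rw [Matrix.sub_mulVec, Matrix.one_mulVec, sub_eq_zero] at hu0
      exact hu0
    set u : Fin 3 → ℝ := (Real.sqrt (u₀ ⬝ᵥ u₀))⁻¹ • u₀ with hud
    have huu : u ⬝ᵥ u = 1 := my_unit_smul u₀ hu0ne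
    have hfix : A *ᵥ u = u := by
      rw [hud, Matrix.mulVec_smul, hfix0]
    set B : Matrix (Fin 3) (Fin 3) ℝ := 1 - A + Matrix.vecMulVec u u with hB
    have hBexp : ∀ x, B *ᵥ x = x - A *ᵥ x + (u ⬝ᵥ x) • u := by
      intro x
      rw [hB, Matrix.add_mulVec, Matrix.sub_mulVec, Matrix.one_mulVec, my_outer_mulVec]
    have hdotA : ∀ x : Fin 3 → ℝ, u ⬝ᵥ (A *ᵥ x) = u ⬝ᵥ x := by
      intro x
      conv_lhs => rw [← hfix]
      exact hA u x
    have hBdot : ∀ x, u ⬝ᵥ (B *ᵥ x) = u ⬝ᵥ x := by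
      intro x
      rw [hBexp, dotProduct_add, dotProduct_sub, hdotA, dotProduct_smul, huu,
        smul_eq_mul, mul_one]
      ring
    have hinj : Function.Injective B.mulVecLin := by
      rw [← LinearMap.ker_eq_bot, LinearMap.ker_eq_bot']
      intro x hx0
      rw [Matrix.mulVecLin_apply] at hx0
      have hux : u ⬝ᵥ x = 0 := by
        have h := hBdot x
        rw [hx0] at h
        simpa using h.symm
      have hAx : A *ᵥ x = x := by
        have h := hBexp x
        rw [hx0, hux, zero_smul, add_zero] at h
        exact (sub_eq_zero.mp h.symm).symm
      by_contra hxne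
      have hz : A *ᵥ cross3 u x = cross3 u x := my_fix_cross A hA hdet u x hfix hAx
      set Q : Matrix (Fin 3) (Fin 3) ℝ := Matrix.of ![u, x, cross3 u x] with hQ
      have hQA : Q * Aᵀ = Q := by
        ext i j
        fin_cases i
        · have h := congrFun hfix j
          simp [Matrix.mulVec, dotProduct, Fin.sum_univ_three] at h
          simp [hQ, Matrix.mul_apply, Fin.sum_univ_three]
          linarith
        · have h := congrFun hAx j
          simp [Matrix.mulVec, dotProduct, Fin.sum_univ_three] at h
          simp [hQ, Matrix.mul_apply, Fin.sum_univ_three]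
          linarith
        · have h := congrFun hz j
          simp [Matrix.mulVec, dotProduct, Fin.sum_univ_three] at h
          simp [hQ, Matrix.mul_apply, Fin.sum_univ_three]
          linarith
      have hdetQ : Q.det ≠ 0 := by
        have h := my_dot_cross u x (cross3 u x)
        rw [my_dot_cross_quad, huu, hux] at h
        have hxx : 0 < x ⬝ᵥ x := my_dot_self_pos x hxne
        rw [hQ, ← h]
        nlinarith
      have hAt1 : Aᵀ = 1 := by
        have hunit : IsUnit Q.det := isUnit_iff_ne_zero.mpr hdetQ
        calc Aᵀ = 1 * Aᵀ := (one_mul _).symm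
        _ = (Q⁻¹ * Q) * Aᵀ := by rw [Matrix.nonsing_inv_mul Q hunit]
        _ = Q⁻¹ * (Q * Aᵀ) := by rw [mul_assoc]
        _ = Q⁻¹ * Q := by rw [hQA]
        _ = 1 := Matrix.nonsing_inv_mul Q hunit
      have hA1 : A = 1 := by
        have h := congrArg Matrix.transpose hAt1
        simpa using h
      exact h1 hA1
    have hsurj : Function.Surjective B.mulVecLin :=
      LinearMap.injective_iff_surjective.mp hinj
    obtain ⟨v, hv⟩ := hsurj (cross3 b u)
    rw [Matrix.mulVecLin_apply] at hv
    have huv : u ⬝ᵥ v = 0 := by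
      have h := hBdot v
      rw [hv, my_dot_cross_self] at h
      exact h.symm
    refine ⟨v, u, huu, huv, hfix, ?_⟩
    have h := hBexp v
    rw [hv, huv, zero_smul, add_zero] at h
    have h6 : A *ᵥ v + cross3 b u = A *ᵥ v + (v - A *ᵥ v) := by rw [← h]
    rw [h6]
    abel

/-- Every element `(b,A)` of `ℝ³ ⋊ SO(3)`, acting on the tangent bundle
`M = {(v,u) : ⟨u,u⟩ = 1, ⟨u,v⟩ = 0}` of the unit sphere by
`(b,A)·(v,u) = (Av + b × (Au), Au)`, has a fixed point on `M`; in particular no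
nontrivial subgroup of `ℝ³ ⋊ SO(3)` (realized as a group of transformations of
`ℝ³ × ℝ³`) acts freely on `M`. -/
theorem stmt5 :
    (∀ (b : Fin 3 → ℝ) (A : Matrix (Fin 3) (Fin 3) ℝ),
      (∀ x y : Fin 3 → ℝ, A.mulVec x ⬝ᵥ A.mulVec y = x ⬝ᵥ y) → A.det = 1 →
      ∃ v u : Fin 3 → ℝ, u ⬝ᵥ u = 1 ∧ u ⬝ᵥ v = 0 ∧
        A.mulVec u = u ∧ A.mulVec v + cross3 b u = v) ∧
    (∀ Γ : Subgroup (Equiv.Perm ((Fin 3 → ℝ) × (Fin 3 → ℝ))),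
      -- every element of Γ is a transformation coming from `ℝ³ ⋊ SO(3)`
      (∀ γ ∈ Γ, ∃ (b : Fin 3 → ℝ) (A : Matrix (Fin 3) (Fin 3) ℝ),
        (∀ x y : Fin 3 → ℝ, A.mulVec x ⬝ᵥ A.mulVec y = x ⬝ᵥ y) ∧ A.det = 1 ∧
        ∀ p : (Fin 3 → ℝ) × (Fin 3 → ℝ),
          γ p = (A.mulVec p.1 + cross3 b (A.mulVec p.2), A.mulVec p.2)) →
      -- if Γ acts freely on M ...
      (∀ γ ∈ Γ, (∃ p : (Fin 3 → ℝ) × (Fin 3 → ℝ),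
          (p.2 ⬝ᵥ p.2 = 1 ∧ p.2 ⬝ᵥ p.1 = 0) ∧ γ p = p) → γ = 1) →
      -- ... then Γ is trivial
      Γ = ⊥) := by
  constructor
  · exact stmt5_part1
  · intro Γ hrep hfree
    rw [Subgroup.eq_bot_iff_forall]
    intro γ hγ
    obtain ⟨b, A, hA, hdet, hact⟩ := hrep γ hγ
    obtain ⟨v, u, huu, huv, hfixu, hfixv⟩ := stmt5_part1 b A hA hdet
    apply hfree γ hγ
    refine ⟨(v, u), ⟨huu, huv⟩, ?_⟩
    rw [hact (v, u)]
    simp only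
    rw [hfixu, hfixv]
end

section
/- Let Γ be a finitely generated group that admits an injective group homomorphism Γ → GL(n,ℝ) for some n (Γ is linear). Suppose Γ acts on a Hausdorff topological space X and the action is properly discontinuous, i.e. for all compact subsets K, L ⊆ X the set {γ ∈ Γ : γ·K ∩ L ≠ ∅} is finite. Then Γ has a subgroup of finite index whose action on X is free. -/
/-!
Selberg's lemma. The matrix entries of the images of finitely many generators of `Γ` and of their
inverses generate a finitely generated subring `A ⊆ ℝ`, and `Γ` embeds into `GL_n(A)`. For a
maximal ideal `m` of `A` the residue field `A/m` is finite (Zariski's lemma over the Jacobson ring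
`ℤ`), so the principal congruence subgroup `Γ(m)` has finite index. If `g = 1 + x ∈ Γ(m)` satisfies
`g^ℓ = 1` with `ℓ ∉ m`, then `ℓx = -x²B`, which pushes `x` from `m^s` into `m^(s+1)`; by Krull's
intersection theorem `x = 0`. As `A` is a Jacobson domain of characteristic zero, it has two
maximal ideals of different residue characteristics, and `Γ(m₁) ∩ Γ(m₂)` is torsion-free.
Finally, a properly discontinuous action has finite point stabilisers, so every element with a
fixed point is torsion.
-/

instance Subgroup.finiteIndex_comap {G G' : Type*} [Group G] [Group G'] (H : Subgroup G')
    [H.FiniteIndex] (f : G →* G') : (H.comap f).FiniteIndex :=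
  ⟨by rw [Subgroup.index_comap]; exact (H.isFiniteRelIndex_of_finiteIndex).relIndex_ne_zero⟩

theorem IsOfFinOrder.exists_orderOf_pow_prime {G : Type*} [Monoid G] {g : G} (hg : IsOfFinOrder g)
    (hg₁ : g ≠ 1) : ∃ k ℓ : ℕ, ℓ.Prime ∧ orderOf (g ^ k) = ℓ := by
  have hord : orderOf g ≠ 1 := mt orderOf_eq_one_iff.mp hg₁
  exact ⟨orderOf g / (orderOf g).minFac, _, Nat.minFac_prime hord,
    orderOf_pow_orderOf_div hg.orderOf_pos.ne' (Nat.minFac_dvd _)⟩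

theorem MulAction.isOfFinOrder_of_finite_stabilizer {Γ X : Type*} [Group Γ] [MulAction Γ X]
    {x : X} (hx : (stabilizer Γ x : Set Γ).Finite) {γ : Γ} (hγ : γ • x = x) : IsOfFinOrder γ :=
  have := hx.to_subtype
  (stabilizer Γ x).subtype.isOfFinOrder (isOfFinOrder_of_finite (⟨γ, hγ⟩ : stabilizer Γ x))

instance Int.instIsJacobsonRing : IsJacobsonRing ℤ := by
  rw [isJacobsonRing_iff_prime_eq]
  intro P hP
  rcases eq_or_ne P ⊥ with rfl | hP₀
  · refine le_antisymm (fun x hx => ?_) Ideal.le_jacobson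
    -- `x * x + 1` is a unit of `ℤ` only for `x = 0`.
    have hunit := Int.isUnit_iff.mp (Ideal.mem_jacobson_bot.mp hx x)
    rw [Ideal.mem_bot]
    rcases hunit with h | h <;> nlinarith
  · exact Ideal.jacobson_eq_self_of_isMaximal (H := IsPrime.to_maximal_ideal hP₀)

theorem ringChar_ne_zero_of_moduleFinite_int (K : Type*) [Field K] [Module.Finite ℤ K] :
    ringChar K ≠ 0 := by
  intro h
  have : CharZero K := (CharP.ringChar_zero_iff_CharZero (R := K)).mp h
  have : Algebra.IsIntegral ℤ K := Algebra.IsIntegral.of_finite ℤ K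
  exact Int.not_isField
    (isField_of_isIntegral_of_isField (algebraMap ℤ K).injective_int (Field.toIsField K))

theorem finite_of_moduleFinite_int (K : Type*) [Field K] [Module.Finite ℤ K] : Finite K := by
  refine Module.finite_of_fg_torsion K fun x => ?_
  refine ⟨⟨ringChar K, mem_nonZeroDivisors_of_ne_zero ?_⟩, ?_⟩
  · exact Nat.cast_ne_zero.mpr (ringChar_ne_zero_of_moduleFinite_int K)
  · simp

theorem Ideal.finite_quotient_of_finiteType_int {A : Type*} [CommRing A] [Algebra.FiniteType ℤ A]
    (m : Ideal A) [m.IsMaximal] : Finite (A ⧸ m) := by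
  let := Ideal.Quotient.field m
  have := finite_of_finite_type_of_isJacobsonRing ℤ (A ⧸ m)
  exact finite_of_moduleFinite_int _

theorem Ideal.natCast_mem_iff_ringChar_dvd {A : Type*} [CommRing A] (m : Ideal A) (k : ℕ) :
    (k : A) ∈ m ↔ ringChar (A ⧸ m) ∣ k := by
  rw [← Ideal.Quotient.eq_zero_iff_mem, map_natCast, ringChar.spec]

theorem exists_isMaximal_pair_forall_prime_natCast_notMem (A : Type*) [CommRing A] [IsDomain A]
    [CharZero A] [Algebra.FiniteType ℤ A] :
    ∃ m₁ m₂ : Ideal A, m₁.IsMaximal ∧ m₂.IsMaximal ∧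
      ∀ ℓ : ℕ, ℓ.Prime → (ℓ : A) ∉ m₁ ∨ (ℓ : A) ∉ m₂ := by
  obtain ⟨m₁, hm₁⟩ := Ideal.exists_maximal A
  have := m₁.finite_quotient_of_finiteType_int
  let := Ideal.Quotient.field m₁
  set p := ringChar (A ⧸ m₁)
  have hp : p.Prime := CharP.prime_ringChar _
  have : IsJacobsonRing A := isJacobsonRing_of_finiteType (A := ℤ)
  -- The Jacobson radical of the domain `A` is zero, so the nonzero `p` avoids some maximal ideal.
  obtain ⟨m₂, hm₂, hpm₂⟩ : ∃ m₂ : Ideal A, m₂.IsMaximal ∧ (p : A) ∉ m₂ := by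
    by_contra! h
    have hp_mem : (p : A) ∈ (⊥ : Ideal A).jacobson := Ideal.mem_sInf.mpr fun J hJ => h J hJ.2
    rw [IsJacobsonRing.out' ⊥ Ideal.isRadical_bot, Ideal.mem_bot] at hp_mem
    exact Nat.cast_ne_zero.mpr hp.ne_zero hp_mem
  refine ⟨m₁, m₂, hm₁, hm₂, fun ℓ hℓ => not_and_or.mp fun ⟨hℓm₁, hℓm₂⟩ => hpm₂ ?_⟩
  rw [m₁.natCast_mem_iff_ringChar_dvd, Nat.prime_dvd_prime_iff_eq hp hℓ] at hℓm₁
  rwa [← hℓm₁] at hℓm₂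

open Polynomial in
theorem exists_add_one_pow_eq {S : Type*} [Ring S] (x : S) (ℓ : ℕ) :
    ∃ B : S, (x + 1) ^ ℓ = 1 + ℓ • x + x ^ 2 * B := by
  obtain ⟨Q, hQ⟩ := sq_dvd_add_pow_sub_sub (X : ℤ[X]) 1 ℓ
  refine ⟨aeval x Q, ?_⟩
  have := congrArg (aeval x) hQ
  simp only [map_sub, map_pow, map_mul, map_add, aeval_X, map_one, map_natCast, one_pow,
    one_mul] at this
  rw [add_comm 1 x, ← (Nat.cast_commute ℓ x).eq] at this
  rw [nsmul_eq_mul, ← this]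
  abel

theorem Ideal.mem_pow_of_mul_mem_pow_of_notMem {A : Type*} [CommRing A] {m : Ideal A}
    (hm : m.IsMaximal) {a b : A} (ha : a ∉ m) {k : ℕ} (hab : a * b ∈ m ^ k) : b ∈ m ^ k := by
  rcases k.eq_zero_or_pos with rfl | hk
  · simp
  have hrad : (m ^ k).radical = m := by rw [m.radical_pow hk.ne', hm.isPrime.radical]
  have hprim : (m ^ k).IsPrimary := Ideal.isPrimary_of_isMaximal_radical (by rwa [hrad])
  rw [mul_comm] at hab
  exact ((Ideal.isPrimary_iff.mp hprim).2 hab).resolve_right (by rwa [hrad])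

theorem Ideal.mul_mem_matrix_mul {R n : Type*} [CommRing R] [Fintype n] [DecidableEq n]
    {I J : Ideal R} {M N : Matrix n n R} (hM : M ∈ I.matrix n) (hN : N ∈ J.matrix n) :
    M * N ∈ (I * J).matrix n := by
  rw [Ideal.mem_matrix] at *
  intro i j
  exact Ideal.sum_mem _ fun k _ => Ideal.mul_mem_mul (hM i k) (hN k j)

theorem Matrix.eq_one_of_pow_eq_one_of_sub_one_mem_matrix {A n : Type*} [CommRing A] [IsDomain A]
    [IsNoetherianRing A] [Fintype n] [DecidableEq n] {m : Ideal A} (hm : m.IsMaximal)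
    {M : Matrix n n A} {ℓ : ℕ} (hMℓ : M ^ ℓ = 1) (hℓ : (ℓ : A) ∉ m) (hM : M - 1 ∈ m.matrix n) :
    M = 1 := by
  set x := M - 1
  obtain ⟨B, hB⟩ := exists_add_one_pow_eq x ℓ
  have hx : ℓ • x = -(x ^ 2 * B) := by
    rw [sub_add_cancel, hMℓ] at hB
    exact eq_neg_of_add_eq_zero_left (by simpa [add_assoc] using hB.symm)
  -- `ℓ • x = -x²B` lifts `x ≡ 0 mod m^s` to `x ≡ 0 mod m^(s+1)`.
  have hstep (s : ℕ) (hs : 1 ≤ s) (hxs : x ∈ (m ^ s).matrix n) : x ∈ (m ^ (s + 1)).matrix n := by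
    have hx2B : x ^ 2 * B ∈ (m ^ (s + 1)).matrix n := by
      have := Ideal.mul_mem_matrix_mul (Ideal.mul_mem_matrix_mul hxs hxs)
        ((Ideal.mem_matrix n ⊤ B).mpr fun _ _ => Submodule.mem_top)
      rw [Ideal.mul_top, ← pow_add, ← sq] at this
      exact Ideal.matrix_monotone n (Ideal.pow_le_pow_right (by omega)) this
    rw [Ideal.mem_matrix] at hx2B ⊢
    intro i j
    refine Ideal.mem_pow_of_mul_mem_pow_of_notMem hm hℓ ?_
    simpa [← nsmul_eq_mul, ← Matrix.smul_apply, hx] using neg_mem (hx2B i j)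
  have hpow (s : ℕ) : x ∈ (m ^ (s + 1)).matrix n := by
    induction s with
    | zero => simpa using hM
    | succ s ih => exact hstep (s + 1) (by omega) ih
  suffices x = 0 from sub_eq_zero.mp this
  ext i j
  have hmem : x i j ∈ ⨅ s : ℕ, m ^ s := Ideal.mem_iInf.mpr fun s =>
    Ideal.pow_le_pow_right s.le_succ ((Ideal.mem_matrix n _ x).mp (hpow s) i j)
  rwa [Ideal.iInf_pow_eq_bot_of_isDomain m hm.ne_top, Ideal.mem_bot] at hmem

namespace Matrix.GeneralLinearGroup

variable {n A : Type*} [Fintype n] [DecidableEq n] [CommRing A]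

def principalCongruenceSubgroup (m : Ideal A) : Subgroup (GL n A) :=
  (map (Ideal.Quotient.mk m)).ker

theorem sub_one_mem_matrix_of_mem_principalCongruenceSubgroup {m : Ideal A} {g : GL n A}
    (hg : g ∈ principalCongruenceSubgroup m) : (g : Matrix n n A) - 1 ∈ m.matrix n := by
  rw [Ideal.mem_matrix]
  intro i j
  have := congrArg (fun h : GL n (A ⧸ m) => h i j) (MonoidHom.mem_ker.mp hg)
  rw [GeneralLinearGroup.map_apply, Units.val_one, ← map_one (Ideal.Quotient.mk m).mapMatrix,
    RingHom.mapMatrix_apply, Matrix.map_apply, Ideal.Quotient.eq] at this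
  rwa [Matrix.sub_apply]

instance (m : Ideal A) [Finite (A ⧸ m)] :
    (principalCongruenceSubgroup (n := n) m).FiniteIndex :=
  Subgroup.finiteIndex_ker _

theorem eq_one_of_pow_eq_one_of_mem_principalCongruenceSubgroup [IsDomain A] [IsNoetherianRing A]
    {m : Ideal A} (hm : m.IsMaximal) {g : GL n A} (hg : g ∈ principalCongruenceSubgroup m)
    {ℓ : ℕ} (hgℓ : g ^ ℓ = 1) (hℓ : (ℓ : A) ∉ m) : g = 1 :=
  Units.ext <| Matrix.eq_one_of_pow_eq_one_of_sub_one_mem_matrix hm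
    (by rw [← Units.val_pow_eq_pow_val, hgℓ, Units.val_one]) hℓ
    (sub_one_mem_matrix_of_mem_principalCongruenceSubgroup hg)

theorem exists_finiteIndex_forall_isOfFinOrder_eq_one [IsDomain A] [CharZero A]
    [Algebra.FiniteType ℤ A] :
    ∃ H : Subgroup (GL n A), H.FiniteIndex ∧ ∀ g ∈ H, IsOfFinOrder g → g = 1 := by
  have := Algebra.FiniteType.isNoetherianRing ℤ A
  obtain ⟨m₁, m₂, hm₁, hm₂, hm⟩ := exists_isMaximal_pair_forall_prime_natCast_notMem A
  have := m₁.finite_quotient_of_finiteType_int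
  have := m₂.finite_quotient_of_finiteType_int
  refine ⟨principalCongruenceSubgroup m₁ ⊓ principalCongruenceSubgroup m₂, inferInstance,
    fun g hg hfin => ?_⟩
  by_contra hg₁
  obtain ⟨k, ℓ, hℓ, hgk⟩ := hfin.exists_orderOf_pow_prime hg₁
  have hgkℓ : (g ^ k) ^ ℓ = 1 := hgk ▸ pow_orderOf_eq_one _
  have hgk₁ : g ^ k = 1 := by
    rcases hm ℓ hℓ with h | h
    · exact eq_one_of_pow_eq_one_of_mem_principalCongruenceSubgroup hm₁ (pow_mem hg.1 k) hgkℓ h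
    · exact eq_one_of_pow_eq_one_of_mem_principalCongruenceSubgroup hm₂ (pow_mem hg.2 k) hgkℓ h
  rw [hgk₁, orderOf_one] at hgk
  exact hℓ.one_lt.ne hgk

theorem mem_range_map_val_of_forall_mem {R : Subalgebra ℤ A} {g : GL n A} (hg : ∀ i j, g i j ∈ R)
    (hg' : ∀ i j, g⁻¹ i j ∈ R) : g ∈ (map (R.val : R →+* A)).range := by
  let M : Matrix n n R := Matrix.of fun i j => ⟨g i j, hg i j⟩
  let N : Matrix n n R := Matrix.of fun i j => ⟨g⁻¹ i j, hg' i j⟩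
  have hval : Function.Injective (RingHom.mapMatrix (R.val : R →+* A) : Matrix n n R → _) :=
    Matrix.map_injective Subtype.val_injective
  have hMN : M * N = 1 := hval <| by
    rw [map_mul, map_one]
    exact congrArg Units.val (mul_inv_cancel g)
  have hNM : N * M = 1 := hval <| by
    rw [map_mul, map_one]
    exact congrArg Units.val (inv_mul_cancel g)
  exact ⟨⟨M, N, hMN, hNM⟩, Units.ext rfl⟩

theorem exists_fg_subalgebra_lift {Γ : Type*} [Group Γ] (hΓ : Group.FG Γ) (f : Γ →* GL n A) :
    ∃ (R : Subalgebra ℤ A) (ρ : Γ →* GL n R), R.FG ∧ (map (R.val : R →+* A)).comp ρ = f := by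
  obtain ⟨T, hT, hTfin⟩ := Group.fg_iff.mp hΓ
  let E : Set A := ⋃ t ∈ T, (Set.range fun p : n × n => f t p.1 p.2) ∪
    Set.range fun p : n × n => (f t)⁻¹ p.1 p.2
  let R := Algebra.adjoin ℤ E
  have hE : E.Finite := hTfin.biUnion fun _ _ => (Set.finite_range _).union (Set.finite_range _)
  have hφ : Function.Injective (map (n := n) (R.val : R →+* A)) := fun g h hgh =>
    Units.ext <| Matrix.map_injective Subtype.val_injective (congrArg Units.val hgh)
  have hfR : f.range ≤ (map (R.val : R →+* A)).range := by
    rw [MonoidHom.range_eq_map, ← hT, MonoidHom.map_closure, Subgroup.closure_le]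
    rintro _ ⟨t, ht, rfl⟩
    refine mem_range_map_val_of_forall_mem (fun i j => ?_) (fun i j => ?_) <;>
      refine Algebra.subset_adjoin (Set.mem_biUnion ht ?_)
    exacts [Or.inl ⟨(i, j), rfl⟩, Or.inr ⟨(i, j), rfl⟩]
  refine ⟨R, (MonoidHom.ofInjective hφ).symm.toMonoidHom.comp
    (f.codRestrict _ fun γ => hfR ⟨γ, rfl⟩), Subalgebra.fg_def.mpr ⟨E, hE, rfl⟩, ?_⟩
  ext γ : 1
  simp

end Matrix.GeneralLinearGroup

open Pointwise

open Matrix.GeneralLinearGroup in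
theorem stmt13_general {Γ : Type*} [Group Γ] (hfg : Group.FG Γ)
    (hlin : ∃ (n : ℕ) (f : Γ →* Matrix.GeneralLinearGroup (Fin n) ℝ), Function.Injective f)
    {X : Type*} [TopologicalSpace X] [MulAction Γ X]
    (hpd : ∀ K L : Set X, IsCompact K → IsCompact L →
      {γ : Γ | ((γ • K) ∩ L).Nonempty}.Finite) :
    ∃ H : Subgroup Γ, H.FiniteIndex ∧ ∀ γ ∈ H, ∀ x : X, γ • x = x → γ = 1 := by
  obtain ⟨n, f, hf⟩ := hlin
  obtain ⟨R, ρ, hRfg, hρf⟩ := exists_fg_subalgebra_lift hfg f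
  have : Algebra.FiniteType ℤ R := (Subalgebra.fg_iff_finiteType R).mp hRfg
  have hρ : Function.Injective ρ :=
    .of_comp (f := map (R.val : R →+* ℝ)) (by rw [← MonoidHom.coe_comp, hρf]; exact hf)
  obtain ⟨H, hH, hHtf⟩ := exists_finiteIndex_forall_isOfFinOrder_eq_one (n := Fin n) (A := R)
  refine ⟨H.comap ρ, inferInstance, fun γ hγ x hγx => hρ ?_⟩
  have hstab : (MulAction.stabilizer Γ x : Set Γ).Finite :=
    (hpd {x} {x} isCompact_singleton isCompact_singleton).subset fun δ hδ =>
      ⟨x, by simpa [Set.smul_set_singleton] using hδ.symm⟩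
  rw [map_one]
  exact hHtf _ hγ (ρ.isOfFinOrder (MulAction.isOfFinOrder_of_finite_stabilizer hstab hγx))

/-- A finitely generated linear group `Γ` acting properly discontinuously
on a Hausdorff space `X` has a finite index subgroup acting freely. -/
theorem stmt13 {Γ : Type*} [Group Γ] (hfg : Group.FG Γ)
    (hlin : ∃ (n : ℕ) (f : Γ →* Matrix.GeneralLinearGroup (Fin n) ℝ), Function.Injective f)
    {X : Type*} [TopologicalSpace X] [T2Space X] [MulAction Γ X]
    (hpd : ∀ K L : Set X, IsCompact K → IsCompact L →
      {γ : Γ | ((γ • K) ∩ L).Nonempty}.Finite) :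
    ∃ H : Subgroup Γ, H.FiniteIndex ∧ ∀ γ ∈ H, ∀ x : X, γ • x = x → γ = 1 :=
  stmt13_general hfg hlin hpd
end
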